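/- arXiv:2004.07559 — 2 statements merged into one kernel-verified Lean document; each statement's English description precedes it below -/
import Mathlib

section
/- Let $w : \mathbb{C} \to \mathbb{C}$ be a smooth function whose formal power series at $0$ in $z, \bar z$ is $w = \sum_{i+j \ge 1} a_{ij} z^i \bar{z}^j$, and suppose there is a smooth function $g$ with $g(z) z \bar z = w \bar w$ and with $g(0) = |a_{10}|^2 - |a_{01}|^2 > 0$. Then $a_{0,j} = 0$ for all $j \ge 1$, i.e. the formal power series of $w$ is divisible by $z$. -/
/-- Formal "complex conjugate" of a power series in the two commuting variables
`z = X 0`, `z̄ = X 1`: conjugate all coefficients and interchange the roles of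
`z` and `z̄`. -/
noncomputable def mvBar (f : MvPowerSeries (Fin 2) ℂ) : MvPowerSeries (Fin 2) ℂ :=
  fun d => starRingEnd ℂ (f (Finsupp.equivMapDomain (Equiv.swap (0 : Fin 2) 1) d))

/-!
Setting `z = 0` is a ring homomorphism `ℂ[[z, z̄]] → ℂ[[z̄]]` and kills `z z̄`, so
`w(0, z̄) · w̄(0, z̄) = 0` in the integral domain `ℂ[[z̄]]`. The `z̄`-coefficient of
`w̄(0, z̄)` is `conj a₁₀ ≠ 0`, hence `w(0, z̄) = 0`.
-/

namespace MvPowerSeries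

variable {σ R : Type*} [CommSemiring R]

/-- All variables other than `X i` are set to zero. -/
noncomputable def restrictAxis (i : σ) : MvPowerSeries σ R →+* PowerSeries R where
  toFun f := PowerSeries.mk fun n => coeff (Finsupp.single i n) f
  map_one' := by
    classical
    ext n
    simp [coeff_one, PowerSeries.coeff_one]
  map_mul' f g := by
    classical
    ext n
    simp only [PowerSeries.coeff_mk, coeff_mul, PowerSeries.coeff_mul,
      Finsupp.antidiagonal_single, Finset.sum_map]
    rfl
  map_zero' := by ext; simp
  map_add' f g := by ext; simp

@[simp]
lemma coeff_restrictAxis (i : σ) (n : ℕ) (f : MvPowerSeries σ R) :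
    PowerSeries.coeff n (restrictAxis i f) = coeff (Finsupp.single i n) f :=
  PowerSeries.coeff_mk n fun n => coeff (Finsupp.single i n) f

lemma restrictAxis_X_of_ne {i j : σ} (hij : j ≠ i) :
    restrictAxis i (X j : MvPowerSeries σ R) = 0 := by
  classical
  ext n
  rw [coeff_restrictAxis, coeff_X, if_neg, map_zero]
  intro h
  simpa [Finsupp.single_apply, hij] using DFunLike.congr_fun h j

end MvPowerSeries

open MvPowerSeries

lemma coeff_single_one_mvBar (f : MvPowerSeries (Fin 2) ℂ) (n : ℕ) :
    coeff (Finsupp.single 1 n) (mvBar f) = starRingEnd ℂ (coeff (Finsupp.single 0 n) f) := by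
  simp only [mvBar, coeff_apply, Finsupp.equivMapDomain_single, Equiv.swap_apply_right]

theorem stmt3_general (w g : MvPowerSeries (Fin 2) ℂ)
    (heq : g * MvPowerSeries.X 0 * MvPowerSeries.X 1 = w * mvBar w)
    (a10 a01 : ℂ)
    (ha10 : a10 = MvPowerSeries.coeff (Finsupp.single (0 : Fin 2) 1) w)
    (hpos : Complex.normSq a01 < Complex.normSq a10) :
    ∀ j : ℕ, 1 ≤ j → MvPowerSeries.coeff (Finsupp.single (1 : Fin 2) j) w = 0 := by
  have hprod : restrictAxis 1 w * restrictAxis 1 (mvBar w) = 0 := by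
    rw [← map_mul, ← heq, map_mul, map_mul, restrictAxis_X_of_ne zero_ne_one, mul_zero,
      zero_mul]
  have hbar : restrictAxis 1 (mvBar w) ≠ 0 := by
    intro h
    have ha10_zero : a10 = 0 := by
      simpa [coeff_single_one_mvBar, ← ha10] using congr(PowerSeries.coeff 1 $h)
    rw [ha10_zero, map_zero] at hpos
    exact hpos.not_ge (Complex.normSq_nonneg a01)
  intro j _
  simpa using congr(PowerSeries.coeff j $((mul_eq_zero.mp hprod).resolve_right hbar))

theorem stmt3 (w g : MvPowerSeries (Fin 2) ℂ)
    (hw0 : MvPowerSeries.constantCoeff w = 0)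
    (hgreal : mvBar g = g)
    (heq : g * MvPowerSeries.X 0 * MvPowerSeries.X 1 = w * mvBar w)
    (a10 a01 : ℂ)
    (ha10 : a10 = MvPowerSeries.coeff (Finsupp.single (0 : Fin 2) 1) w)
    (ha01 : a01 = MvPowerSeries.coeff (Finsupp.single (1 : Fin 2) 1) w)
    (hg0 : MvPowerSeries.coeff 0 g = ((Complex.normSq a10 - Complex.normSq a01 : ℝ) : ℂ))
    (hpos : Complex.normSq a01 < Complex.normSq a10) :
    ∀ j : ℕ, 1 ≤ j → MvPowerSeries.coeff (Finsupp.single (1 : Fin 2) j) w = 0 :=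
  stmt3_general w g heq a10 a01 ha10 hpos
end

section
/- On $\mathbb{C} P^{2n}$, the holomorphic bivector field $\pi$ induced by $\tilde{\pi} = \sum_{j=1}^{n} z_{2j-1} z_{2j}\, \partial_{z_{2j-1}} \wedge \partial_{z_{2j}}$ on $\mathbb{C}^{2n+1}$ is well defined (i.e. $\tilde{\pi}$ is invariant under the scaling action of $\mathbb{C}^*$ and descends to $\mathbb{C}P^{2n}$) and satisfies $[\pi, \pi] = 0$, i.e. $\pi$ is a holomorphic Poisson structure. -/
/-!
Scaling invariance is the chain rule `∂ᵢ (f (c • ·)) = c • (∂ᵢ f) (c • ·)`: the quadratic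
coefficient `z_{2m} z_{2m+1}` absorbs the two factors of `c`.

For the Jacobi identity, `{f, {g, h}}` is a double sum over the pair `k` of the outer bracket and
the pair `m` of the inner one. After summing cyclically over `f, g, h`, the `(k, m)` and `(m, k)`
terms cancel: second derivatives cancel by symmetry of the Hessian, and derivatives of the
coefficients either vanish (`k ≠ m`, the pairs involve disjoint variables) or cancel inside the
two-dimensional block (`k = m`). Symmetry of the Hessian needs entire functions of several
variables to be `C²`. This follows from the Cauchy formula along complex lines,
`∂ᵥ f (x) = (2πi)⁻¹ ∮ f (x + t v) / t² dt`, differentiated under the integral sign with a Cauchy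
estimate as dominating bound: directional derivatives of entire functions are again entire.
-/

/-- Directional (holomorphic) partial derivative `∂f/∂z_i` of `f : ℂ^N → ℂ`. -/
noncomputable def pd {N : ℕ} (f : (Fin N → ℂ) → ℂ) (z : Fin N → ℂ) (i : Fin N) : ℂ :=
  fderiv ℂ f z (Pi.single i 1)

/-- The Poisson bracket of the bivector
`π̃ = ∑_{m=1}^{n} z_{2m-1} z_{2m} ∂_{z_{2m-1}} ∧ ∂_{z_{2m}}` on `ℂ^{2n+1}`
(0-indexed: pairs `(2m, 2m+1)` for `m < n`):
`{f,g}(z) = ∑_m z_{2m} z_{2m+1} (∂_{2m}f ∂_{2m+1}g - ∂_{2m+1}f ∂_{2m}g)`. -/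
noncomputable def pbCP (n : ℕ) (f g : (Fin (2 * n + 1) → ℂ) → ℂ) :
    (Fin (2 * n + 1) → ℂ) → ℂ := fun z =>
  ∑ m : Fin n,
    z (⟨2 * (m : ℕ), by have := m.isLt; omega⟩ : Fin (2 * n + 1)) *
    z (⟨2 * (m : ℕ) + 1, by have := m.isLt; omega⟩ : Fin (2 * n + 1)) *
    (pd f z ⟨2 * (m : ℕ), by have := m.isLt; omega⟩ *
       pd g z ⟨2 * (m : ℕ) + 1, by have := m.isLt; omega⟩ -
     pd f z ⟨2 * (m : ℕ) + 1, by have := m.isLt; omega⟩ *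
       pd g z ⟨2 * (m : ℕ), by have := m.isLt; omega⟩)

open Complex Metric MeasureTheory
open scoped Real ContDiff

section EntireFunctions

variable {E F : Type*} [NormedAddCommGroup E] [NormedSpace ℂ E] [NormedAddCommGroup F]
  [NormedSpace ℂ F] {f : E → F}

theorem Differentiable.hasDerivAt_comp_add_smul (hf : Differentiable ℂ f) (x v : E) (t : ℂ) :
    HasDerivAt (fun s : ℂ => f (x + s • v)) (fderiv ℂ f (x + t • v) v) t :=
  (hf _).hasFDerivAt.comp_hasDerivAt t
    (by simpa using ((hasDerivAt_id t).smul_const v).const_add x)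

theorem Differentiable.differentiable_comp_add_smul (hf : Differentiable ℂ f) (x v : E) :
    Differentiable ℂ (fun s : ℂ => f (x + s • v)) :=
  fun t => (hf.hasDerivAt_comp_add_smul x v t).differentiableAt

theorem Differentiable.hasDerivAt_zero_comp_add_smul (hf : Differentiable ℂ f) (x v : E) :
    HasDerivAt (fun s : ℂ => f (x + s • v)) (fderiv ℂ f x v) 0 := by
  simpa using hf.hasDerivAt_comp_add_smul x v 0

theorem Differentiable.norm_fderiv_le_of_forall_mem_closedBall (hf : Differentiable ℂ f) {x : E}
    {r M : ℝ} (hr : 0 < r) (hM : ∀ y ∈ closedBall x r, ‖f y‖ ≤ M) : ‖fderiv ℂ f x‖ ≤ M / r := by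
  have hM₀ : 0 ≤ M := (norm_nonneg _).trans (hM x (mem_closedBall_self hr.le))
  refine ContinuousLinearMap.opNorm_le_of_unit_norm (by positivity) fun v hv => ?_
  rw [← (hf.hasDerivAt_zero_comp_add_smul x v).deriv]
  refine norm_deriv_le_of_forall_mem_sphere_norm_le hr
    (hf.differentiable_comp_add_smul x v).diffContOnCl fun t ht => hM _ ?_
  simpa [norm_smul, hv] using ht.le

theorem Differentiable.fderiv_apply_eq_circleIntegral [CompleteSpace F] (hf : Differentiable ℂ f)
    (x v : E) :
    fderiv ℂ f x v = (2 * π * I)⁻¹ • ∮ t in C(0, 1), (1 / t ^ 2) • f (x + t • v) := by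
  have h := (hf.differentiable_comp_add_smul x v).differentiableOn.deriv_eq_smul_circleIntegral
    (c := 0) one_pos
  rw [(hf.hasDerivAt_zero_comp_add_smul x v).deriv] at h
  simp only [sub_zero] at h
  rw [h, inv_smul_smul₀ (by simp [Real.pi_ne_zero])]

theorem Differentiable.differentiable_fderiv_apply [CompleteSpace F] [SecondCountableTopology F]
    [FiniteDimensional ℂ E] (hf : Differentiable ℂ f) (v : E) :
    Differentiable ℂ fun x => fderiv ℂ f x v := by
  borelize E
  intro x₀
  obtain ⟨M, hM⟩ := (isCompact_closedBall x₀ (‖v‖ + 2)).exists_bound_of_continuousOn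
    hf.continuous.continuousOn
  set k : ℝ → ℂ := fun θ => I / circleMap 0 1 θ
  set γ : E → ℝ → E := fun x θ => x + circleMap 0 1 θ • v
  have hk : ∀ θ, ‖k θ‖ = 1 := by simp [k]
  have hγ : ∀ x, Continuous (γ x) := fun x => by fun_prop
  have hk_cont : Continuous k :=
    continuous_const.div (continuous_circleMap 0 1) fun θ => circleMap_ne_center one_ne_zero
  have hrep : ∀ x, fderiv ℂ f x v = (2 * π * I)⁻¹ • ∫ θ in 0..2 * π, k θ • f (γ x θ) := by
    intro x
    rw [hf.fderiv_apply_eq_circleIntegral, circleIntegral]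
    congr 2
    funext θ
    rw [smul_smul, deriv_circleMap]
    congr 1
    have := circleMap_ne_center (c := 0) (θ := θ) one_ne_zero
    simp only [k]
    field_simp
  have hsub : ∀ x ∈ ball x₀ 1, ∀ θ, closedBall (γ x θ) 1 ⊆ closedBall x₀ (‖v‖ + 2) := by
    intro x hx θ y hy
    rw [mem_closedBall_iff_norm] at hy ⊢
    calc ‖y - x₀‖ = ‖(y - γ x θ) + (x - x₀) + circleMap 0 1 θ • v‖ := by
          simp only [γ]; abel_nf
      _ ≤ ‖y - γ x θ‖ + ‖x - x₀‖ + ‖circleMap 0 1 θ • v‖ := norm_add₃_le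
      _ ≤ 1 + 1 + ‖v‖ := by
          gcongr
          · exact (mem_ball_iff_norm.mp hx).le
          · simp [norm_smul]
      _ = ‖v‖ + 2 := by ring
  have hderiv := intervalIntegral.hasFDerivAt_integral_of_dominated_of_fderiv_le
    (μ := volume) (a := 0) (b := 2 * π) (F := fun x θ => k θ • f (γ x θ))
    (F' := fun x θ => k θ • fderiv ℂ f (γ x θ)) (bound := fun _ => M)
    (ball_mem_nhds x₀ one_pos)
    (.of_forall fun x => ((hk_cont.smul (hf.continuous.comp (hγ x))).aestronglyMeasurable))
    ((hk_cont.smul (hf.continuous.comp (hγ x₀))).intervalIntegrable _ _)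
    (hk_cont.aestronglyMeasurable.smul
      ((measurable_fderiv ℂ f).comp (hγ x₀).measurable).aestronglyMeasurable)
    (.of_forall fun θ _ x hx => by
      rw [norm_smul, hk, one_mul]
      simpa using hf.norm_fderiv_le_of_forall_mem_closedBall one_pos
        fun y hy => hM y (hsub x hx θ hy))
    intervalIntegrable_const
    (.of_forall fun θ _ x _ => ((hf _).hasFDerivAt.comp x
      ((hasFDerivAt_id x).add_const _)).const_smul (k θ))
  simp_rw [hrep]
  exact hderiv.differentiableAt.const_smul _

theorem Differentiable.contDiff_of_finiteDimensional [CompleteSpace F] [SecondCountableTopology F]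
    [FiniteDimensional ℂ E] (hf : Differentiable ℂ f) : ContDiff ℂ ∞ f := by
  rw [contDiff_infty]
  intro n
  induction n generalizing f with
  | zero => exact contDiff_zero.2 hf.continuous
  | succ n ih =>
    rw [Nat.cast_succ, contDiff_succ_iff_fderiv_apply]
    exact ⟨hf, by simp, fun v => ih (hf.differentiable_fderiv_apply v)⟩

end EntireFunctions

section PartialDerivatives

variable {N : ℕ} {f g : (Fin N → ℂ) → ℂ} {z : Fin N → ℂ}

theorem Differentiable.differentiable_pd (hf : Differentiable ℂ f) (i : Fin N) :
    Differentiable ℂ fun z => pd f z i :=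
  hf.differentiable_fderiv_apply _

theorem Differentiable.pd_pd_comm (hf : Differentiable ℂ f) (z : Fin N → ℂ) (i j : Fin N) :
    pd (fun w => pd f w j) z i = pd (fun w => pd f w i) z j := by
  have hcd := hf.contDiff_of_finiteDimensional
  have hsymm := hcd.contDiffAt.isSymmSndFDerivAt (x := z) (by simpa using ENat.LEInfty.out)
  have hf' : DifferentiableAt ℂ (fderiv ℂ f) z :=
    ((contDiff_infty_iff_fderiv.1 hcd).2.differentiable (by simp)) z
  have hpd_pd : ∀ a b : Fin N, pd (fun w => pd f w b) z a =
      fderiv ℂ (fderiv ℂ f) z (Pi.single a 1) (Pi.single b 1) := fun a b => by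
    simp only [pd]
    rw [fderiv_clm_apply hf' (differentiableAt_const _)]
    simp
  rw [hpd_pd, hpd_pd, hsymm]

theorem pd_mul (hf : DifferentiableAt ℂ f z) (hg : DifferentiableAt ℂ g z) (i : Fin N) :
    pd (fun w => f w * g w) z i = pd f z i * g z + f z * pd g z i := by
  simp only [pd, fderiv_fun_mul hf hg, add_apply, smul_apply, smul_eq_mul]
  ring

theorem pd_sub (hf : DifferentiableAt ℂ f z) (hg : DifferentiableAt ℂ g z) (i : Fin N) :
    pd (fun w => f w - g w) z i = pd f z i - pd g z i := by
  simp [pd, fderiv_fun_sub hf hg]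

theorem pd_sum {ι : Type*} (s : Finset ι) {F : ι → (Fin N → ℂ) → ℂ}
    (hF : ∀ m ∈ s, DifferentiableAt ℂ (F m) z) (i : Fin N) :
    pd (fun w => ∑ m ∈ s, F m w) z i = ∑ m ∈ s, pd (F m) z i := by
  simp [pd, fderiv_fun_sum hF]

theorem pd_apply (k i : Fin N) : pd (fun w => w k) z i = if k = i then 1 else 0 := by
  simp [pd, fderiv_apply, Pi.single_apply]

theorem pd_comp_smul (c : ℂ) (i : Fin N) :
    pd (fun w => f (c • w)) z i = c * pd f (c • z) i := by
  simp [pd, fderiv_comp_smul]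

end PartialDerivatives

theorem Finset.sum_sum_eq_zero_of_add_swap {ι R : Type*} [Fintype ι] [Ring R] [NoZeroDivisors R]
    [CharZero R] (T : ι → ι → R) (hT : ∀ k m, T k m + T m k = 0) : ∑ k, ∑ m, T k m = 0 := by
  have h : (∑ k, ∑ m, T k m) + ∑ k, ∑ m, T k m = 0 := by
    nth_rw 2 [Finset.sum_comm]
    simp only [← Finset.sum_add_distrib, hT, Finset.sum_const_zero]
  exact add_self_eq_zero.mp h

section PoissonBracket

variable {n : ℕ} {f g h : (Fin (2 * n + 1) → ℂ) → ℂ}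

def evenIdx (m : Fin n) : Fin (2 * n + 1) := ⟨2 * m, by omega⟩

def oddIdx (m : Fin n) : Fin (2 * n + 1) := ⟨2 * m + 1, by omega⟩

@[simp] theorem evenIdx_inj {m k : Fin n} : evenIdx m = evenIdx k ↔ m = k := by
  simp [evenIdx, Fin.ext_iff]

@[simp] theorem oddIdx_inj {m k : Fin n} : oddIdx m = oddIdx k ↔ m = k := by
  simp [oddIdx, Fin.ext_iff]

@[simp] theorem evenIdx_ne_oddIdx (m k : Fin n) : evenIdx m ≠ oddIdx k := by
  simp only [evenIdx, oddIdx, ne_eq, Fin.ext_iff]; omega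

@[simp] theorem oddIdx_ne_evenIdx (m k : Fin n) : oddIdx m ≠ evenIdx k :=
  (evenIdx_ne_oddIdx k m).symm

noncomputable def pbCPTerm (f g : (Fin (2 * n + 1) → ℂ) → ℂ) (m : Fin n)
    (z : Fin (2 * n + 1) → ℂ) : ℂ :=
  z (evenIdx m) * z (oddIdx m) *
    (pd f z (evenIdx m) * pd g z (oddIdx m) - pd f z (oddIdx m) * pd g z (evenIdx m))

theorem pbCP_eq_sum_pbCPTerm (f g : (Fin (2 * n + 1) → ℂ) → ℂ) :
    pbCP n f g = fun z => ∑ m, pbCPTerm f g m z := rfl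

theorem differentiable_pbCPTerm (hf : Differentiable ℂ f) (hg : Differentiable ℂ g) (m : Fin n) :
    Differentiable ℂ (pbCPTerm f g m) := by
  unfold pbCPTerm
  have := hf.differentiable_pd
  have := hg.differentiable_pd
  fun_prop

theorem pd_pbCPTerm (hf : Differentiable ℂ f) (hg : Differentiable ℂ g) (m : Fin n)
    (z : Fin (2 * n + 1) → ℂ) (i : Fin (2 * n + 1)) :
    pd (pbCPTerm f g m) z i =
      ((if evenIdx m = i then 1 else 0) * z (oddIdx m) +
          z (evenIdx m) * (if oddIdx m = i then 1 else 0)) *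
        (pd f z (evenIdx m) * pd g z (oddIdx m) - pd f z (oddIdx m) * pd g z (evenIdx m)) +
      z (evenIdx m) * z (oddIdx m) *
        (pd (fun w => pd f w (evenIdx m)) z i * pd g z (oddIdx m) +
          pd f z (evenIdx m) * pd (fun w => pd g w (oddIdx m)) z i -
          pd (fun w => pd f w (oddIdx m)) z i * pd g z (evenIdx m) -
          pd f z (oddIdx m) * pd (fun w => pd g w (evenIdx m)) z i) := by
  have hf' := fun j => hf.differentiable_pd j z
  have hg' := fun j => hg.differentiable_pd j z
  have hz := fun j => differentiableAt_apply (𝕜 := ℂ) j z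
  unfold pbCPTerm
  rw [pd_mul (by fun_prop) (by fun_prop), pd_mul (hz _) (hz _), pd_sub (by fun_prop) (by fun_prop),
    pd_mul (hf' _) (hg' _), pd_mul (hf' _) (hg' _), pd_apply, pd_apply]
  ring

theorem pbCP_comp_smul (c : ℂ) (f g : (Fin (2 * n + 1) → ℂ) → ℂ) :
    pbCP n (fun z => f (c • z)) (fun z => g (c • z)) = fun z => pbCP n f g (c • z) := by
  funext z
  simp only [pbCP_eq_sum_pbCPTerm, pbCPTerm, pd_comp_smul, Pi.smul_apply, smul_eq_mul]
  exact Finset.sum_congr rfl fun m _ => by ring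

theorem pd_pbCP (hf : Differentiable ℂ f) (hg : Differentiable ℂ g) (z : Fin (2 * n + 1) → ℂ)
    (i : Fin (2 * n + 1)) : pd (pbCP n f g) z i = ∑ m, pd (pbCPTerm f g m) z i :=
  pd_sum _ (fun m _ => differentiable_pbCPTerm hf hg m z) i

noncomputable def pbCPNestedTerm (f g h : (Fin (2 * n + 1) → ℂ) → ℂ) (z : Fin (2 * n + 1) → ℂ)
    (k m : Fin n) : ℂ :=
  z (evenIdx k) * z (oddIdx k) *
    (pd f z (evenIdx k) * pd (pbCPTerm g h m) z (oddIdx k) -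
      pd f z (oddIdx k) * pd (pbCPTerm g h m) z (evenIdx k))

theorem pbCP_pbCP_eq_sum (hg : Differentiable ℂ g) (hh : Differentiable ℂ h)
    (z : Fin (2 * n + 1) → ℂ) :
    pbCP n f (pbCP n g h) z = ∑ k, ∑ m, pbCPNestedTerm f g h z k m := by
  simp only [pbCP_eq_sum_pbCPTerm f, pbCPTerm, pd_pbCP hg hh, Finset.mul_sum,
    ← Finset.sum_sub_distrib]
  rfl

theorem pbCPNestedTerm_cyclic_add_swap (hf : Differentiable ℂ f) (hg : Differentiable ℂ g)
    (hh : Differentiable ℂ h) (z : Fin (2 * n + 1) → ℂ) (k m : Fin n) :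
    (pbCPNestedTerm f g h z k m + pbCPNestedTerm g h f z k m + pbCPNestedTerm h f g z k m) +
      (pbCPNestedTerm f g h z m k + pbCPNestedTerm g h f z m k + pbCPNestedTerm h f g z m k) =
        0 := by
  simp only [pbCPNestedTerm, pd_pbCPTerm hf hg, pd_pbCPTerm hg hh, pd_pbCPTerm hh hf]
  rcases eq_or_ne k m with rfl | hkm
  · simp only [evenIdx_ne_oddIdx, oddIdx_ne_evenIdx, if_true, if_false]
    rw [hf.pd_pd_comm z (evenIdx k) (oddIdx k), hg.pd_pd_comm z (evenIdx k) (oddIdx k),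
      hh.pd_pd_comm z (evenIdx k) (oddIdx k)]
    ring
  · simp only [evenIdx_inj, oddIdx_inj, evenIdx_ne_oddIdx, oddIdx_ne_evenIdx, hkm, hkm.symm,
      if_false, hf.pd_pd_comm z (evenIdx m), hf.pd_pd_comm z (oddIdx m),
      hg.pd_pd_comm z (evenIdx m), hg.pd_pd_comm z (oddIdx m),
      hh.pd_pd_comm z (evenIdx m), hh.pd_pd_comm z (oddIdx m)]
    ring

theorem pbCP_jacobi (hf : Differentiable ℂ f) (hg : Differentiable ℂ g)
    (hh : Differentiable ℂ h) :
    pbCP n f (pbCP n g h) + pbCP n g (pbCP n h f) + pbCP n h (pbCP n f g) = 0 := by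
  funext z
  simp only [Pi.add_apply, Pi.zero_apply, pbCP_pbCP_eq_sum hg hh, pbCP_pbCP_eq_sum hh hf,
    pbCP_pbCP_eq_sum hf hg, ← Finset.sum_add_distrib]
  exact Finset.sum_sum_eq_zero_of_add_swap _ (pbCPNestedTerm_cyclic_add_swap hf hg hh z)

end PoissonBracket

theorem stmt8 (n : ℕ) :
    (∀ lam : ℂ, lam ≠ 0 →
      ∀ f g : (Fin (2 * n + 1) → ℂ) → ℂ, Differentiable ℂ f → Differentiable ℂ g →
        pbCP n (fun z => f (lam • z)) (fun z => g (lam • z)) =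
          fun z => pbCP n f g (lam • z)) ∧
    (∀ f g h : (Fin (2 * n + 1) → ℂ) → ℂ,
      Differentiable ℂ f → Differentiable ℂ g → Differentiable ℂ h →
        pbCP n f (pbCP n g h) + pbCP n g (pbCP n h f) + pbCP n h (pbCP n f g) = 0) :=
  ⟨fun lam _ f g _ _ => pbCP_comp_smul lam f g, fun _ _ _ hf hg hh => pbCP_jacobi hf hg hh⟩
end
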